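/- arXiv:2204.06521 — 9 statements merged into one kernel-verified Lean document; each statement's English description precedes it below -/
import Mathlib

section
/- Let w ∈ ℝ^n satisfy w_1 ≥ w_2 ≥ ... ≥ w_n and w_i > 0 for all i. Then g_w is strictly monotone: if x, y ∈ ℝ^n satisfy x_i ≤ y_i for all i, then g_w(x) ≤ g_w(y), and if moreover x ≠ y then g_w(x) < g_w(y). -/
/-- The nondecreasing rearrangement `x^↑` of a vector `x ∈ ℝ^n`. -/
noncomputable def sortedAsc {n : ℕ} (x : Fin n → ℝ) : Fin n → ℝ := x ∘ Tuple.sort x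

/-- The generalized Gini welfare function `g_w(x) = Σ_i w_i x^↑_i`. -/
noncomputable def ggf {n : ℕ} (w x : Fin n → ℝ) : ℝ := ∑ i, w i * sortedAsc x i

/-!
`x ↦ x^↑` is monotone for the pointwise order, since `x^↑_k ≤ a` exactly when at least
`k + 1` coordinates of `x` are `≤ a`, and raising coordinates only lowers these counts. Sorting
also preserves the coordinate sum, so `x ≤ y`, `x ≠ y` force `x^↑ ≠ y^↑`; hence sorting is strictly
monotone, and so is `g_w`, a positive combination of the sorted coordinates.
-/

open Finset

theorem weightedSum_strictMono {ι R : Type*} [Fintype ι] [Semiring R] [PartialOrder R]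
    [IsOrderedCancelAddMonoid R] [PosMulStrictMono R] {w : ι → R} (hw : ∀ i, 0 < w i) :
    StrictMono fun f : ι → R => ∑ i, w i * f i := by
  intro f g hfg
  obtain ⟨hle, i, hi⟩ := Pi.lt_def.1 hfg
  exact sum_lt_sum (fun j _ => mul_le_mul_of_nonneg_left (hle j) (hw j).le)
    ⟨i, mem_univ i, mul_lt_mul_of_pos_left hi (hw i)⟩

section sortedAsc

variable {n : ℕ}

theorem sum_sortedAsc (x : Fin n → ℝ) : ∑ i, sortedAsc x i = ∑ i, x i :=
  Equiv.sum_comp (Tuple.sort x) x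

theorem card_sortedAsc_le (x : Fin n → ℝ) (a : ℝ) :
    #{i | sortedAsc x i ≤ a} = #{i | x i ≤ a} := by
  simp only [← Fintype.card_subtype]
  exact Fintype.card_congr (Equiv.subtypeEquiv (Tuple.sort x) fun _ => Iff.rfl)

theorem sortedAsc_le_iff (x : Fin n → ℝ) (k : Fin n) (a : ℝ) :
    sortedAsc x k ≤ a ↔ k < #{i | x i ≤ a} := by
  rw [← card_sortedAsc_le]
  exact (Tuple.lt_card_le_iff_apply_le_of_monotone (Tuple.monotone_sort x)).symm

theorem sortedAsc_mono : Monotone (sortedAsc (n := n)) := by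
  intro x y hxy k
  rw [sortedAsc_le_iff]
  exact ((sortedAsc_le_iff y k _).1 le_rfl).trans_le
    (card_le_card (monotone_filter_right _ fun i _ h => (hxy i).trans h))

theorem sortedAsc_strictMono : StrictMono (sortedAsc (n := n)) := by
  intro x y hxy
  refine (sortedAsc_mono hxy.le).lt_of_ne fun heq => ?_
  exact (Fintype.sum_strictMono hxy).ne (by simp only [← sum_sortedAsc x, heq, sum_sortedAsc])

end sortedAsc

theorem ggf_strictly_monotone_general {n : ℕ} (w : Fin n → ℝ) (hw0 : ∀ i, 0 < w i)
    (x y : Fin n → ℝ) (hxy : ∀ i, x i ≤ y i) :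
    ggf w x ≤ ggf w y ∧ (x ≠ y → ggf w x < ggf w y) := by
  have hggf : StrictMono (ggf w) := (weightedSum_strictMono hw0).comp sortedAsc_strictMono
  exact ⟨hggf.monotone hxy, fun hne => hggf (lt_of_le_of_ne hxy hne)⟩

/-- If `w_1 ≥ ... ≥ w_n` and `w_i > 0` for all `i`, then `g_w` is strictly monotone:
if `x_i ≤ y_i` for all `i`, then `g_w(x) ≤ g_w(y)`, with strict inequality when `x ≠ y`. -/
theorem ggf_strictly_monotone {n : ℕ} (w : Fin n → ℝ) (hw : Antitone w) (hw0 : ∀ i, 0 < w i)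
    (x y : Fin n → ℝ) (hxy : ∀ i, x i ≤ y i) :
    ggf w x ≤ ggf w y ∧ (x ≠ y → ggf w x < ggf w y) :=
  ggf_strictly_monotone_general w hw0 x y hxy
end

section
/- Let w ∈ ℝ^n with w_1 ≥ ... ≥ w_n ≥ 0 and let x, x' ∈ ℝ^n with generalized Lorenz curves X, X'. If X_i ≥ X'_i for all i (i.e. x weakly Lorenz dominates x'), then g_w(x) ≥ g_w(x'). If moreover the weights are strictly decreasing and positive (w_1 > w_2 > ... > w_n > 0) and X ≠ X', then g_w(x) > g_w(x'). -/
/-- The generalized Lorenz curve of `x`: `X_i = x^↑_1 + ... + x^↑_i`. -/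
noncomputable def lorenz {n : ℕ} (x : Fin n → ℝ) (i : Fin n) : ℝ :=
  ∑ j ∈ Finset.Iic i, sortedAsc x j

noncomputable def coeff {n : ℕ} (w : Fin n → ℝ) (i : Fin n) : ℝ :=
  if h : (i : ℕ) + 1 < n then w i - w ⟨(i : ℕ) + 1, h⟩ else w i

lemma coeff_nonneg {n : ℕ} (w : Fin n → ℝ) (hw : Antitone w) (hw0 : ∀ i, 0 ≤ w i)
    (i : Fin n) : 0 ≤ coeff w i := by
  unfold coeff
  split_ifs with h
  · have : w ⟨(i : ℕ) + 1, h⟩ ≤ w i := hw (by simp [Fin.le_def])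
    linarith
  · exact hw0 i

lemma coeff_pos {n : ℕ} (w : Fin n → ℝ) (hw : StrictAnti w) (hw0 : ∀ i, 0 < w i)
    (i : Fin n) : 0 < coeff w i := by
  unfold coeff
  split_ifs with h
  · have : w ⟨(i : ℕ) + 1, h⟩ < w i := hw (by simp [Fin.lt_def])
    linarith
  · exact hw0 i

lemma sum_coeff_Ici {n : ℕ} (w : Fin n → ℝ) (j : Fin n) :
    ∑ i ∈ Finset.Ici j, coeff w i = w j := by
  classical
  set w' : ℕ → ℝ := fun k => if h : k < n then w ⟨k, h⟩ else 0 with hw'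
  have hstep : ∀ k, (j : ℕ) ≤ k → k < n → (if h : k < n then coeff w ⟨k, h⟩ else 0)
      = w' k - w' (k + 1) := by
    intro k _ hk
    simp only [hw', hk, dif_pos]
    unfold coeff
    split_ifs with h
    · simp [h]
    · simp [h]
  have h1 : ∑ i ∈ Finset.Ici j, coeff w i
      = ∑ i : Fin n, if (j : ℕ) ≤ (i : ℕ) then coeff w i else 0 := by
    rw [show Finset.Ici j = Finset.univ.filter (fun i : Fin n => (j : ℕ) ≤ (i : ℕ)) from by
      ext i; simp only [Finset.mem_Ici, Finset.mem_filter, Finset.mem_univ, true_and, Fin.le_def], Finset.sum_filter]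
  have h2 : (∑ i : Fin n, if (j : ℕ) ≤ (i : ℕ) then coeff w i else 0)
      = ∑ k ∈ Finset.range n, if (j : ℕ) ≤ k then (if h : k < n then coeff w ⟨k, h⟩ else 0) else 0 := by
    rw [Finset.sum_range fun k => if (j : ℕ) ≤ k then (if h : k < n then coeff w ⟨k, h⟩ else 0) else 0]
    apply Finset.sum_congr rfl
    intro i _
    simp [i.isLt]
  have h3 : (∑ k ∈ Finset.range n, if (j : ℕ) ≤ k then (if h : k < n then coeff w ⟨k, h⟩ else 0) else 0)
      = ∑ k ∈ Finset.Ico (j : ℕ) n, (w' k - w' (k + 1)) := by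
    rw [Finset.range_eq_Ico, ← Finset.sum_Ico_consecutive _ (Nat.zero_le (j : ℕ)) (le_of_lt j.isLt)]
    rw [Finset.sum_eq_zero (fun k hk => by
      rw [Finset.mem_Ico] at hk
      simp [Nat.not_le.mpr hk.2]), zero_add]
    apply Finset.sum_congr rfl
    intro k hk
    rw [Finset.mem_Ico] at hk
    rw [if_pos hk.1, hstep k hk.1 hk.2]
  have h4 : ∑ k ∈ Finset.Ico (j : ℕ) n, (w' k - w' (k + 1)) = w' (j : ℕ) - w' n := by
    rw [Finset.sum_Ico_eq_sub _ (le_of_lt j.isLt), Finset.sum_range_sub', Finset.sum_range_sub']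
    ring
  rw [h1, h2, h3, h4]
  simp [hw', j.isLt, Nat.lt_irrefl]

lemma ggf_eq_sum_coeff_lorenz {n : ℕ} (w x : Fin n → ℝ) :
    ggf w x = ∑ i, coeff w i * lorenz x i := by
  classical
  unfold ggf lorenz
  have : ∑ i, coeff w i * ∑ j ∈ Finset.Iic i, sortedAsc x j
      = ∑ i : Fin n, ∑ j ∈ Finset.Iic i, coeff w i * sortedAsc x j := by
    simp [Finset.mul_sum]
  rw [this]
  rw [Finset.sum_comm' (s := Finset.univ) (t := fun i => Finset.Iic i)
    (t' := Finset.univ) (s' := fun j => Finset.Ici j) (by intro i j; simp)]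
  apply Finset.sum_congr rfl
  intro j _
  rw [← Finset.sum_mul, sum_coeff_Ici]

/-- If `x` weakly Lorenz dominates `x'` (i.e. `X_i ≥ X'_i` for all `i`), then
`g_w(x) ≥ g_w(x')` for any `w` with `w_1 ≥ ... ≥ w_n ≥ 0`. If moreover the weights are
strictly decreasing and positive and `X ≠ X'`, then `g_w(x) > g_w(x')`. -/
theorem ggf_monotone_lorenz_dominance {n : ℕ} (w : Fin n → ℝ) (hw : Antitone w)
    (hw0 : ∀ i, 0 ≤ w i) (x x' : Fin n → ℝ) (hdom : ∀ i, lorenz x' i ≤ lorenz x i) :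
    ggf w x' ≤ ggf w x ∧
    ((StrictAnti w ∧ (∀ i, 0 < w i)) → lorenz x ≠ lorenz x' → ggf w x' < ggf w x) := by
  rw [ggf_eq_sum_coeff_lorenz, ggf_eq_sum_coeff_lorenz]
  constructor
  · apply Finset.sum_le_sum
    intro i _
    exact mul_le_mul_of_nonneg_left (hdom i) (coeff_nonneg w hw hw0 i)
  · rintro ⟨hsa, hpos⟩ hne
    obtain ⟨i, hi⟩ : ∃ i, lorenz x i ≠ lorenz x' i := by
      by_contra h
      push_neg at h
      exact hne (funext h)
    apply Finset.sum_lt_sum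
    · intro k _
      exact mul_le_mul_of_nonneg_left (hdom k) (coeff_nonneg w hw hw0 k)
    · exact ⟨i, Finset.mem_univ i, by
        have : lorenz x' i < lorenz x i := lt_of_le_of_ne (hdom i) (Ne.symm hi)
        exact mul_lt_mul_of_pos_left this (coeff_pos w hsa hpos i)⟩
end

section
/- Let w ∈ ℝ^n with w_1 ≥ ... ≥ w_n ≥ 0 and x ∈ ℝ^n, and let σ be a permutation of {1,...,n} with x_{σ(1)} ≤ ... ≤ x_{σ(n)}. Define g ∈ ℝ^n by g_{σ(i)} = w_i for all i (i.e. g = w_{σ^{-1}}). Then g is a supergradient of the concave function g_w at x: for all y ∈ ℝ^n, g_w(y) ≤ g_w(x) + ⟨g, y − x⟩. -/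
/-- Let `w_1 ≥ ... ≥ w_n ≥ 0`, let `σ` sort `x` in nondecreasing order, and define `g` by
`g_{σ(i)} = w_i` (i.e. `g = w_{σ⁻¹}`). Then `g` is a supergradient of the concave function
`g_w` at `x`: for all `y`, `g_w(y) ≤ g_w(x) + ⟨g, y − x⟩`. -/
theorem ggf_supergradient {n : ℕ} (w : Fin n → ℝ) (hw : Antitone w) (hw0 : ∀ i, 0 ≤ w i)
    (x : Fin n → ℝ) (σ : Equiv.Perm (Fin n)) (hσ : Monotone (x ∘ σ))
    (g : Fin n → ℝ) (hg : ∀ i, g (σ i) = w i) :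
    ∀ y : Fin n → ℝ, ggf w y ≤ ggf w x + ∑ i, g i * (y i - x i) := by
  intro y
  have hx : sortedAsc x = x ∘ σ := (Tuple.comp_sort_eq_comp_iff_monotone.mpr hσ).symm
  have hsum : ∑ i, g i * (y i - x i) = ∑ i, w i * (y (σ i) - x (σ i)) := by
    rw [← Equiv.sum_comp σ (fun i => g i * (y i - x i))]
    simp [hg]
  have hRHS : ggf w x + ∑ i, g i * (y i - x i) = ∑ i, w i * y (σ i) := by
    rw [hsum, ggf, hx, ← Finset.sum_add_distrib]
    congr 1; ext i; simp; ring
  rw [hRHS]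
  -- rearrangement inequality
  have hav : Antivary w (sortedAsc y) := by
    intro i j h
    exact hw ((Tuple.monotone_sort y).reflect_lt h).le
  have key := hav.sum_mul_le_sum_mul_comp_perm (σ := σ.trans (Tuple.sort y).symm)
  calc ggf w y = ∑ i, w i * sortedAsc y i := rfl
    _ ≤ ∑ i, w i * sortedAsc y (σ.trans (Tuple.sort y).symm i) := key
    _ = ∑ i, w i * y (σ i) := by
        congr 1; ext i; simp [sortedAsc]
end

section
/- Let w ∈ ℝ^n with w_1 ≥ ... ≥ w_n ≥ 0 and w̃_i = −w_{n+1−i}. A vector y ∈ ℝ^n belongs to the permutahedron P(w̃) if and only if ⟨y, z⟩ ≤ −g_w(z) for all z ∈ ℝ^n. (Equivalently, the Fenchel conjugate of h = −g_w is the indicator function of P(w̃).) -/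
/-- The permutahedron induced by `v`: the convex hull of all permutations of `v`. -/
noncomputable def permutahedron {n : ℕ} (v : Fin n → ℝ) : Set (Fin n → ℝ) :=
  convexHull ℝ {y | ∃ σ : Equiv.Perm (Fin n), y = v ∘ σ}

/-- The reversed negated weight vector `w̃`, with `w̃_i = −w_{n+1−i}`. -/
noncomputable def tildeW {n : ℕ} (w : Fin n → ℝ) : Fin n → ℝ := fun i => -w i.rev

/-!
A polytope is the set of points lying below its support function, and the support function of
a polytope is the maximum of the linear form over its vertices. For the vertices `w̃ ∘ σ` of
`P(w̃)` and a direction `z`, the rearrangement inequality says that `⟨w̃ ∘ σ, z⟩` is maximal when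
`w̃ ∘ σ` is ordered like `z`. Since `w̃` is nonincreasing, this pairs `-w_i` with `z^↑_i`, and the
maximum is `-g_w(z)`.
-/

open Equiv

section SupportFunction

variable {ι : Type*} [Fintype ι]

theorem convexHull_subset_setOf_dotProduct_le {S : Set (ι → ℝ)} {z : ι → ℝ} {c : ℝ}
    (h : ∀ s ∈ S, s ⬝ᵥ z ≤ c) : convexHull ℝ S ⊆ {y | y ⬝ᵥ z ≤ c} :=
  convexHull_min h (convex_halfSpace_le ((dotProductBilin ℝ ℝ).flip z).isLinear c)

theorem exists_dotProduct_lt_of_notMem_convexHull {S : Set (ι → ℝ)} (hS : S.Finite)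
    {y : ι → ℝ} (hy : y ∉ convexHull ℝ S) : ∃ z, ∀ s ∈ S, s ⬝ᵥ z < y ⬝ᵥ z := by
  classical
  obtain ⟨f, u, hf, hu⟩ :=
    geometric_hahn_banach_closed_point (convex_convexHull ℝ S) (hS.isClosed_convexHull ℝ) hy
  have hf_eq (x : ι → ℝ) : f x = x ⬝ᵥ (dotProductEquiv ℝ ι).symm f.toLinearMap := by
    rw [dotProduct_comm, ← dotProductEquiv_apply_apply, LinearEquiv.apply_symm_apply]
    rfl
  exact ⟨_, fun s hs => by
    simpa only [hf_eq] using (hf s (subset_convexHull ℝ S hs)).trans hu⟩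

theorem mem_convexHull_iff_forall_dotProduct_le {S : Set (ι → ℝ)} (hS : S.Finite)
    {h : (ι → ℝ) → ℝ} (hh : ∀ z, IsGreatest ((· ⬝ᵥ z) '' S) (h z)) {y : ι → ℝ} :
    y ∈ convexHull ℝ S ↔ ∀ z, y ⬝ᵥ z ≤ h z := by
  refine ⟨fun hy z => convexHull_subset_setOf_dotProduct_le
    (fun s hs => (hh z).2 ⟨s, hs, rfl⟩) hy, fun hy => ?_⟩
  by_contra hy'
  obtain ⟨z, hz⟩ := exists_dotProduct_lt_of_notMem_convexHull hS hy'
  obtain ⟨s, hs, hsz⟩ := (hh z).1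
  exact (hz s hs).not_ge ((hy z).trans_eq hsz.symm)

end SupportFunction

section Rearrangement

variable {ι : Type*} [Fintype ι]

theorem finite_setOf_eq_comp_perm {α : Type*} (v : ι → α) :
    {y | ∃ σ : Perm ι, y = v ∘ σ}.Finite :=
  (Set.finite_range fun σ : Perm ι => v ∘ σ).subset fun _ ⟨σ, hσ⟩ => ⟨σ, hσ.symm⟩

theorem isGreatest_dotProduct_comp_perm {v z : ι → ℝ} {ρ : Perm ι}
    (h : Monovary (v ∘ ρ) z) :
    IsGreatest ((· ⬝ᵥ z) '' {y | ∃ σ : Perm ι, y = v ∘ σ}) ((v ∘ ρ) ⬝ᵥ z) := by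
  refine ⟨⟨v ∘ ρ, ⟨ρ, rfl⟩, rfl⟩, ?_⟩
  rintro _ ⟨_, ⟨σ, rfl⟩, rfl⟩
  simpa [dotProduct] using h.sum_comp_perm_mul_le_sum_mul (σ := ρ⁻¹ * σ)

end Rearrangement

section Permutahedron

variable {n : ℕ}

theorem antitone_tildeW {w : Fin n → ℝ} (hw : Antitone w) : Antitone (tildeW w) :=
  fun _ _ hij => neg_le_neg (hw (Fin.rev_anti hij))

theorem monovary_comp_sort_symm_trans_revPerm {v : Fin n → ℝ} (hv : Antitone v)
    (z : Fin n → ℝ) : Monovary (v ∘ (Tuple.sort z).symm.trans Fin.revPerm) z := by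
  have := ((hv.comp Fin.rev_anti).monovary (Tuple.monotone_sort z)).comp_right
    (Tuple.sort z).symm
  simpa [Function.comp_def] using this

theorem tildeW_comp_sort_symm_trans_revPerm_dotProduct (w z : Fin n → ℝ) :
    (tildeW w ∘ (Tuple.sort z).symm.trans Fin.revPerm) ⬝ᵥ z = -ggf w z := by
  rw [dotProduct, ggf, ← Equiv.sum_comp (Tuple.sort z), ← Finset.sum_neg_distrib]
  simp [tildeW, sortedAsc]

end Permutahedron

theorem mem_permutahedron_iff_general {n : ℕ} (w : Fin n → ℝ) (hw : Antitone w)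
    (y : Fin n → ℝ) :
    y ∈ permutahedron (tildeW w) ↔ ∀ z : Fin n → ℝ, ∑ i, y i * z i ≤ -(ggf w z) := by
  refine mem_convexHull_iff_forall_dotProduct_le (finite_setOf_eq_comp_perm _) (fun z => ?_)
  rw [← tildeW_comp_sort_symm_trans_revPerm_dotProduct w z]
  exact isGreatest_dotProduct_comp_perm
    (monovary_comp_sort_symm_trans_revPerm (antitone_tildeW hw) z)

/-- For `w_1 ≥ ... ≥ w_n ≥ 0`: `y ∈ P(w̃)` iff `⟨y, z⟩ ≤ −g_w(z)` for all `z`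
(the Fenchel conjugate of `−g_w` is the indicator of `P(w̃)`). -/
theorem mem_permutahedron_iff {n : ℕ} (w : Fin n → ℝ) (hw : Antitone w)
    (hw0 : ∀ i, 0 ≤ w i) (y : Fin n → ℝ) :
    y ∈ permutahedron (tildeW w) ↔ ∀ z : Fin n → ℝ, ∑ i, y i * z i ≤ -(ggf w z) :=
  mem_permutahedron_iff_general w hw y
end

section
/- Let w ∈ ℝ^n with w_1 ≥ ... ≥ w_n ≥ 0, let h(z) = −g_w(z), w̃_i = −w_{n+1−i}, and β > 0. Then for every z ∈ ℝ^n, the point z − β·proj_{P(w̃)}(z/β) is the unique minimizer over z' ∈ ℝ^n of the strongly convex function z' ↦ β·h(z') + (1/2)‖z' − z‖²; i.e. prox_{βh}(z) = z − β·proj_{P(w̃)}(z/β). -/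
/-- `y` is the Euclidean projection of `z` onto `C`. -/
def IsProjOn {n : ℕ} (C : Set (Fin n → ℝ)) (z y : Fin n → ℝ) : Prop :=
  y ∈ C ∧ ∀ y' ∈ C,
    Real.sqrt (∑ i, (z i - y i) ^ 2) ≤ Real.sqrt (∑ i, (z i - y' i) ^ 2)

/-! The permutahedron `P(w̃)` is the subdifferential of the convex, positively homogeneous function
`h = −g_w` at the origin: its support function `x ↦ max_{c ∈ P(w̃)} ⟪c, x⟫` is exactly `h`, by the
rearrangement inequality. If `y` is the projection of `z/β` onto `P(w̃)` and `p = z − βy`, the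
variational inequality of the projection says that `y` maximizes `⟪·, p⟫` over `P(w̃)`, so
`⟪y, p⟫ = h(p)` and `y ∈ ∂h(p)`. Thus `z − p = βy ∈ ∂(βh)(p)`, which makes `p` the unique
minimizer of the strongly convex objective `βh + ½‖· − z‖²`. -/

open Finset

theorem real_inner_sub_nonpos_of_forall_norm_sub_le {F : Type*} [NormedAddCommGroup F]
    [InnerProductSpace ℝ F] {K : Set F} (hK : Convex ℝ K) {u v : F} (hv : v ∈ K)
    (hmin : ∀ w ∈ K, ‖u - v‖ ≤ ‖u - w‖) {w : F} (hw : w ∈ K) :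
    inner ℝ (u - v) (w - v) ≤ 0 := by
  have : Nonempty K := ⟨⟨v, hv⟩⟩
  have hbdd : BddBelow (Set.range fun w : K => ‖u - w‖) :=
    ⟨0, by rintro _ ⟨w, rfl⟩; positivity⟩
  have hinf : ‖u - v‖ = ⨅ w : K, ‖u - w‖ :=
    le_antisymm (le_ciInf fun w => hmin w w.2) (ciInf_le hbdd ⟨v, hv⟩)
  exact (norm_eq_iInf_iff_real_inner_le_zero hK hv).mp hinf w hw

theorem IsProjOn.dotProduct_sub_nonpos {n : ℕ} {C : Set (Fin n → ℝ)} (hC : Convex ℝ C)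
    {u y : Fin n → ℝ} (h : IsProjOn C u y) {c : Fin n → ℝ} (hc : c ∈ C) :
    (u - y) ⬝ᵥ (c - y) ≤ 0 := by
  have hdist (a b : Fin n → ℝ) :
      Real.sqrt (∑ i, (a i - b i) ^ 2) = ‖WithLp.toLp 2 a - WithLp.toLp 2 b‖ := by
    simp [← dist_eq_norm, EuclideanSpace.dist_eq, Real.dist_eq, sq_abs]
  have hK : Convex ℝ (WithLp.ofLp ⁻¹' C : Set (EuclideanSpace ℝ (Fin n))) :=
    hC.linear_preimage (WithLp.linearEquiv 2 ℝ (Fin n → ℝ)).toLinearMap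
  have hinner := real_inner_sub_nonpos_of_forall_norm_sub_le hK (u := WithLp.toLp 2 u)
    (v := WithLp.toLp 2 y) (w := WithLp.toLp 2 c) h.1
    (fun w hw => by simpa [hdist] using h.2 w.ofLp hw) hc
  simpa [← WithLp.toLp_sub, EuclideanSpace.inner_toLp_toLp, dotProduct_comm] using hinner

theorem add_sum_sq_sub_le_of_subgradient {ι : Type*} [Fintype ι] {f : (ι → ℝ) → ℝ}
    {z p : ι → ℝ} (hsub : ∀ x, f p + (z - p) ⬝ᵥ (x - p) ≤ f x) (x : ι → ℝ) :
    f p + (∑ i, (p i - z i) ^ 2) / 2 + (∑ i, (x i - p i) ^ 2) / 2 ≤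
      f x + (∑ i, (x i - z i) ^ 2) / 2 := by
  have hexpand : ∑ i, (x i - z i) ^ 2 =
      ∑ i, (x i - p i) ^ 2 - 2 * ((z - p) ⬝ᵥ (x - p)) + ∑ i, (p i - z i) ^ 2 := by
    simp only [dotProduct, Pi.sub_apply, mul_sum, ← sum_sub_distrib, ← sum_add_distrib]
    exact sum_congr rfl fun i _ => by ring
  linarith [hsub x]

theorem unique_minimizer_of_subgradient {ι : Type*} [Fintype ι] {f : (ι → ℝ) → ℝ}
    {z p : ι → ℝ} (hsub : ∀ x, f p + (z - p) ⬝ᵥ (x - p) ≤ f x) :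
    (∀ x, f p + (∑ i, (p i - z i) ^ 2) / 2 ≤ f x + (∑ i, (x i - z i) ^ 2) / 2) ∧
    (∀ x, f x + (∑ i, (x i - z i) ^ 2) / 2 ≤ f p + (∑ i, (p i - z i) ^ 2) / 2 → x = p) := by
  have hgrowth := add_sum_sq_sub_le_of_subgradient hsub
  have hnonneg (x : ι → ℝ) : 0 ≤ ∑ i, (x i - p i) ^ 2 := sum_nonneg fun i _ => sq_nonneg _
  refine ⟨fun x => by linarith [hgrowth x, hnonneg x], fun x hx => ?_⟩
  have hzero : ∑ i, (x i - p i) ^ 2 = 0 := by linarith [hgrowth x, hnonneg x]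
  funext i
  have hsq := (sum_eq_zero_iff_of_nonneg fun i _ => sq_nonneg (x i - p i)).mp hzero i (mem_univ i)
  exact sub_eq_zero.mp (pow_eq_zero_iff two_ne_zero |>.mp hsq)

theorem ggf_le_sum_mul_comp_perm {n : ℕ} {w : Fin n → ℝ} (hw : Antitone w) (x : Fin n → ℝ)
    (τ : Equiv.Perm (Fin n)) : ggf w x ≤ ∑ i, w (τ i) * x i := by
  have hA : Antivary (sortedAsc x) w := (Tuple.monotone_sort x).antivary hw
  calc ggf w x = ∑ j, sortedAsc x j * w j := by simp only [ggf, mul_comm]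
    _ ≤ ∑ j, sortedAsc x j * w (((Tuple.sort x).trans τ) j) :=
      hA.sum_mul_le_sum_mul_comp_perm
    _ = ∑ i, w (τ i) * x i := by
      rw [← Equiv.sum_comp (Tuple.sort x) fun i => w (τ i) * x i]
      simp [sortedAsc, mul_comm]

theorem ggf_eq_sum_mul_comp_sort_symm {n : ℕ} (w x : Fin n → ℝ) :
    ggf w x = ∑ i, w ((Tuple.sort x).symm i) * x i := by
  rw [← Equiv.sum_comp (Tuple.sort x)]
  simp [ggf, sortedAsc]

theorem tildeW_comp_dotProduct {n : ℕ} (w x : Fin n → ℝ) (σ : Equiv.Perm (Fin n)) :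
    (tildeW w ∘ σ) ⬝ᵥ x = -∑ i, w ((σ.trans Fin.revPerm) i) * x i := by
  simp [dotProduct, tildeW]

theorem dotProduct_le_neg_ggf_of_mem_permutahedron {n : ℕ} {w : Fin n → ℝ} (hw : Antitone w)
    (x : Fin n → ℝ) {c : Fin n → ℝ} (hc : c ∈ permutahedron (tildeW w)) :
    c ⬝ᵥ x ≤ -ggf w x := by
  have hlin : IsLinearMap ℝ fun c : Fin n → ℝ => c ⬝ᵥ x :=
    ⟨fun a b => add_dotProduct a b x, fun r a => smul_dotProduct r a x⟩
  refine convexHull_min ?_ (convex_halfSpace_le hlin _) hc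
  rintro _ ⟨σ, rfl⟩
  simpa [tildeW_comp_dotProduct] using ggf_le_sum_mul_comp_perm hw x (σ.trans Fin.revPerm)

theorem exists_mem_permutahedron_dotProduct_eq_neg_ggf {n : ℕ} (w x : Fin n → ℝ) :
    ∃ c ∈ permutahedron (tildeW w), c ⬝ᵥ x = -ggf w x := by
  refine ⟨tildeW w ∘ ((Tuple.sort x).symm.trans Fin.revPerm), subset_convexHull ℝ _ ⟨_, rfl⟩, ?_⟩
  rw [tildeW_comp_dotProduct, ggf_eq_sum_mul_comp_sort_symm]
  simp

theorem prox_eq_sub_proj_general {n : ℕ} (w : Fin n → ℝ) (hw : Antitone w)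
    (β : ℝ) (hβ : 0 < β) (z y : Fin n → ℝ)
    (hy : IsProjOn (permutahedron (tildeW w)) (fun i => z i / β) y) :
    (∀ z' : Fin n → ℝ,
      β * (-(ggf w (z - β • y))) + (∑ i, ((z - β • y) i - z i) ^ 2) / 2 ≤
        β * (-(ggf w z')) + (∑ i, (z' i - z i) ^ 2) / 2) ∧
    (∀ z' : Fin n → ℝ,
      β * (-(ggf w z')) + (∑ i, (z' i - z i) ^ 2) / 2 ≤
        β * (-(ggf w (z - β • y))) + (∑ i, ((z - β • y) i - z i) ^ 2) / 2 →
      z' = z - β • y) := by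
  set p := z - β • y
  have hsupport (x : Fin n → ℝ) : y ⬝ᵥ x ≤ -ggf w x :=
    dotProduct_le_neg_ggf_of_mem_permutahedron hw x hy.1
  have hp : y ⬝ᵥ p = -ggf w p := by
    obtain ⟨c, hc, hcp⟩ := exists_mem_permutahedron_dotProduct_eq_neg_ggf w p
    have hpu : p = β • ((fun i => z i / β) - y) := by
      ext i
      simp only [Pi.sub_apply, Pi.smul_apply, smul_eq_mul, p]
      field_simp
    have hvi := hy.dotProduct_sub_nonpos (convex_convexHull ℝ _) hc
    have hcp_le : (c - y) ⬝ᵥ p ≤ 0 := by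
      rw [hpu, dotProduct_smul, dotProduct_comm, smul_eq_mul]
      exact mul_nonpos_of_nonneg_of_nonpos hβ.le hvi
    rw [sub_dotProduct] at hcp_le
    linarith [hsupport p]
  refine unique_minimizer_of_subgradient (f := fun x => β * -ggf w x) fun x => ?_
  have hzp : z - p = β • y := sub_sub_cancel z _
  rw [hzp, smul_dotProduct, dotProduct_sub, hp, smul_eq_mul]
  linarith [mul_le_mul_of_nonneg_left (hsupport x) hβ.le]

/-- For `w_1 ≥ ... ≥ w_n ≥ 0`, `h = −g_w` and `β > 0`: if `y = proj_{P(w̃)}(z/β)`, then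
`z − βy` is the unique minimizer of `z' ↦ βh(z') + ½‖z' − z‖²`, i.e.
`prox_{βh}(z) = z − β proj_{P(w̃)}(z/β)`. -/
theorem prox_eq_sub_proj {n : ℕ} (w : Fin n → ℝ) (hw : Antitone w) (hw0 : ∀ i, 0 ≤ w i)
    (β : ℝ) (hβ : 0 < β) (z y : Fin n → ℝ)
    (hy : IsProjOn (permutahedron (tildeW w)) (fun i => z i / β) y) :
    (∀ z' : Fin n → ℝ,
      β * (-(ggf w (z - β • y))) + (∑ i, ((z - β • y) i - z i) ^ 2) / 2 ≤
        β * (-(ggf w z')) + (∑ i, (z' i - z i) ^ 2) / 2) ∧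
    (∀ z' : Fin n → ℝ,
      β * (-(ggf w z')) + (∑ i, (z' i - z i) ^ 2) / 2 ≤
        β * (-(ggf w (z - β • y))) + (∑ i, ((z - β • y) i - z i) ^ 2) / 2 →
      z' = z - β • y) :=
  prox_eq_sub_proj_general w hw β hβ z y hy
end

section
/- Let w ∈ ℝ^n with w_1 ≥ ... ≥ w_n ≥ 0, let h(z) = −g_w(z), w̃_i = −w_{n+1−i}, and β > 0. Then the Moreau envelope h^β is differentiable on ℝ^n with gradient ∇h^β(z) = proj_{P(w̃)}(z/β) for all z, and this gradient is (1/β)-Lipschitz: ‖∇h^β(z) − ∇h^β(z')‖ ≤ (1/β)‖z − z'‖ for all z, z' ∈ ℝ^n. -/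
/-- The Moreau envelope `h^β(z) = inf_{z'} [h(z') + ‖z − z'‖²/(2β)]` (Euclidean norm). -/
noncomputable def moreau {n : ℕ} (β : ℝ) (h : (Fin n → ℝ) → ℝ) (z : Fin n → ℝ) : ℝ :=
  ⨅ z' : Fin n → ℝ, (h z' + (∑ i, (z i - z' i) ^ 2) / (2 * β))

/-!
By the rearrangement inequality, `-g_w` is the support function `y ↦ max_{u ∈ P(w̃)} ⟪u, y⟫` of
the permutahedron. For the support function `h` of a convex set `C`, the Moreau envelope is
`h^β(z) = max_{u ∈ C} (⟪u, z⟫ - β‖u‖²/2)`, with the maximum attained at `u = proj_C(z/β)` (and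
the infimum defining `h^β` attained at `z - βu`). So `h^β` lies above each affine function
`⟪u, ·⟫ - β‖u‖²/2` and touches it where `proj_C(·/β) = u`; since projections onto convex sets
are nonexpansive, the touching point moves `(1/β)`-Lipschitz in `z`, which squeezes `h^β` to
second order around its tangent and gives the gradient `proj_C(z/β)`.
-/
open RealInnerProductSpace Asymptotics

theorem hasFDerivAt_of_abs_sub_le_mul_sq {F : Type*} [NormedAddCommGroup F] [NormedSpace ℝ F]
    {f : F → ℝ} {L : F →L[ℝ] ℝ} {x : F} (K : ℝ)
    (hf : ∀ y, |f y - f x - L (y - x)| ≤ K * ‖y - x‖ ^ 2) : HasFDerivAt f L x := by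
  rw [hasFDerivAt_iff_isLittleO_nhds_zero]
  refine (IsBigO.of_bound K (Filter.Eventually.of_forall fun h => ?_)).trans_isLittleO
    (isLittleO_norm_pow_id one_lt_two)
  simpa [Real.norm_eq_abs] using hf (x + h)

section Projection

variable {E : Type*} [NormedAddCommGroup E] [InnerProductSpace ℝ E] {C : Set E}

theorem inner_sub_le_zero_of_isMinOn (hC : Convex ℝ C) {z p u : E} (hp : p ∈ C)
    (hmin : IsMinOn (‖z - ·‖) C p) (hu : u ∈ C) : ⟪z - p, u - p⟫ ≤ 0 :=
  (norm_eq_iInf_iff_real_inner_le_zero hC hp).1 (hmin.iInf_eq hp).symm u hu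

theorem norm_sub_le_of_isMinOn (hC : Convex ℝ C) {a b pa pb : E} (ha : pa ∈ C) (hb : pb ∈ C)
    (hma : IsMinOn (‖a - ·‖) C pa) (hmb : IsMinOn (‖b - ·‖) C pb) :
    ‖pa - pb‖ ≤ ‖a - b‖ := by
  have hva := inner_sub_le_zero_of_isMinOn hC ha hma hb
  have hvb := inner_sub_le_zero_of_isMinOn hC hb hmb ha
  have hsq : ‖pa - pb‖ ^ 2 ≤ ⟪a - b, pa - pb⟫ := by
    have : a - b = (a - pa) - (b - pb) + (pa - pb) := by abel
    rw [← neg_sub pa pb, inner_neg_right] at hva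
    rw [this, inner_add_left, inner_sub_left, real_inner_self_eq_norm_sq]
    linarith
  nlinarith [real_inner_le_norm (a - b) (pa - pb), norm_nonneg (pa - pb), norm_nonneg (a - b)]

end Projection

section MoreauEnvelope

variable {E : Type*} [NormedAddCommGroup E] [InnerProductSpace ℝ E]

noncomputable def moreauEnvelope (β : ℝ) (h : E → ℝ) (z : E) : ℝ :=
  ⨅ z', h z' + ‖z - z'‖ ^ 2 / (2 * β)

def IsSupportFunction (C : Set E) (h : E → ℝ) : Prop :=
  ∀ y, IsGreatest ((⟪·, y⟫) '' C) (h y)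

variable {C : Set E} {h : E → ℝ} {β : ℝ}

theorem IsSupportFunction.inner_sub_le_add (hh : IsSupportFunction C h) (hβ : 0 < β) {u : E}
    (hu : u ∈ C) (z z' : E) :
    ⟪u, z⟫ - β / 2 * ‖u‖ ^ 2 ≤ h z' + ‖z - z'‖ ^ 2 / (2 * β) := by
  have hsupp : ⟪u, z'⟫ ≤ h z' := (hh z').2 ⟨u, hu, rfl⟩
  have hcs : ⟪u, z - z'⟫ ≤ ‖u‖ * ‖z - z'‖ := real_inner_le_norm _ _
  have hamgm : ‖u‖ * ‖z - z'‖ ≤ β / 2 * ‖u‖ ^ 2 + ‖z - z'‖ ^ 2 / (2 * β) := by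
    rw [← sub_nonneg]
    have : β / 2 * ‖u‖ ^ 2 + ‖z - z'‖ ^ 2 / (2 * β) - ‖u‖ * ‖z - z'‖
        = (β * ‖u‖ - ‖z - z'‖) ^ 2 / (2 * β) := by
      field_simp
      ring
    rw [this]
    positivity
  rw [inner_sub_right] at hcs
  linarith

theorem IsSupportFunction.le_moreauEnvelope (hh : IsSupportFunction C h) (hβ : 0 < β) {u : E}
    (hu : u ∈ C) (z : E) : ⟪u, z⟫ - β / 2 * ‖u‖ ^ 2 ≤ moreauEnvelope β h z :=
  le_ciInf (hh.inner_sub_le_add hβ hu z)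

theorem IsSupportFunction.moreauEnvelope_eq (hh : IsSupportFunction C h) (hβ : 0 < β)
    (hC : Convex ℝ C) {z p : E} (hp : p ∈ C)
    (hmin : IsMinOn (‖β⁻¹ • z - ·‖) C p) :
    moreauEnvelope β h z = ⟪p, z⟫ - β / 2 * ‖p‖ ^ 2 := by
  refine le_antisymm ?_ (hh.le_moreauEnvelope hβ hp z)
  -- the infimum is attained at `z - β p`
  set z' := z - β • p
  have hbdd : BddBelow (Set.range fun y => h y + ‖z - y‖ ^ 2 / (2 * β)) :=
    ⟨_, Set.forall_mem_range.2 (hh.inner_sub_le_add hβ hp z)⟩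
  obtain ⟨u, hu, hhu⟩ := (hh z').1
  have hz' : z' = β • (β⁻¹ • z - p) := by
    rw [smul_sub, smul_inv_smul₀ hβ.ne']
  have hvi : ⟪u - p, z'⟫ ≤ 0 := by
    rw [hz', real_inner_smul_right, real_inner_comm]
    exact mul_nonpos_of_nonneg_of_nonpos hβ.le (inner_sub_le_zero_of_isMinOn hC hp hmin hu)
  have hnorm : ‖z - z'‖ = β * ‖p‖ := by
    rw [sub_sub_cancel, norm_smul, Real.norm_of_nonneg hβ.le]
  calc moreauEnvelope β h z ≤ h z' + ‖z - z'‖ ^ 2 / (2 * β) := ciInf_le hbdd z'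
    _ ≤ ⟪p, z'⟫ + (β * ‖p‖) ^ 2 / (2 * β) := by
        rw [inner_sub_left] at hvi
        rw [← hhu, hnorm]
        linarith
    _ = ⟪p, z⟫ - β / 2 * ‖p‖ ^ 2 := by
        rw [inner_sub_right, real_inner_smul_right, real_inner_self_eq_norm_sq]
        field_simp
        ring

variable {P : E → E} (hβ : 0 < β) (hC : Convex ℝ C) (hPC : ∀ z, P z ∈ C)
  (hPmin : ∀ z, IsMinOn (‖z - ·‖) C (P z))
include hβ hC hPC hPmin

theorem norm_sub_le_of_isMinOn_smul (z z' : E) :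
    ‖P (β⁻¹ • z) - P (β⁻¹ • z')‖ ≤ β⁻¹ * ‖z - z'‖ := by
  have := norm_sub_le_of_isMinOn hC (hPC _) (hPC _) (hPmin (β⁻¹ • z)) (hPmin (β⁻¹ • z'))
  rwa [← smul_sub, norm_smul, Real.norm_of_nonneg (inv_nonneg.2 hβ.le)] at this

theorem IsSupportFunction.hasFDerivAt_moreauEnvelope (hh : IsSupportFunction C h) (z : E) :
    HasFDerivAt (moreauEnvelope β h) (innerSL ℝ (P (β⁻¹ • z))) z := by
  refine hasFDerivAt_of_abs_sub_le_mul_sq β⁻¹ fun y => ?_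
  -- the minorants for `p = P(z/β)` and `q = P(y/β)`, touching at `z` and `y`, pin the
  -- remainder between `0` and `⟪q - p, y - z⟫`
  have hfz := hh.moreauEnvelope_eq hβ hC (hPC (β⁻¹ • z)) (hPmin _)
  have hfy := hh.moreauEnvelope_eq hβ hC (hPC (β⁻¹ • y)) (hPmin _)
  have hlow_y := hh.le_moreauEnvelope hβ (hPC (β⁻¹ • z)) y
  have hlow_z := hh.le_moreauEnvelope hβ (hPC (β⁻¹ • y)) z
  have hcs := real_inner_le_norm (P (β⁻¹ • y) - P (β⁻¹ • z)) (y - z)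
  have hlip := norm_sub_le_of_isMinOn_smul hβ hC hPC hPmin y z
  have hlip' := mul_le_mul_of_nonneg_right hlip (norm_nonneg (y - z))
  rw [innerSL_apply_apply, abs_le]
  simp only [inner_sub_left, inner_sub_right] at hcs ⊢
  constructor <;> nlinarith

end MoreauEnvelope

section GiniSupport

variable {n : ℕ}

theorem perm_tildeW_dotProduct_le {w : Fin n → ℝ} (hw : Antitone w) (σ : Equiv.Perm (Fin n))
    (y : Fin n → ℝ) :
    (tildeW w ∘ σ) ⬝ᵥ y ≤ -ggf w y := by
  -- rearrangement inequality
  have hav : Antivary w (sortedAsc y) := ((Tuple.monotone_sort y).antivary hw).symm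
  have key :=
    hav.sum_smul_le_sum_comp_perm_smul (σ := (Tuple.sort y).trans (σ.trans Fin.revPerm))
  have reindex := Equiv.sum_comp (Tuple.sort y) fun i => w (σ i).rev * y i
  simp only [smul_eq_mul] at key
  simp only [dotProduct, tildeW, Function.comp_apply, neg_mul, Finset.sum_neg_distrib, ggf]
  exact neg_le_neg (key.trans_eq reindex)

theorem exists_perm_tildeW_dotProduct_eq (w y : Fin n → ℝ) :
    ∃ σ : Equiv.Perm (Fin n), (tildeW w ∘ σ) ⬝ᵥ y = -ggf w y := by
  refine ⟨(Tuple.sort y)⁻¹.trans Fin.revPerm, ?_⟩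
  rw [dotProduct, ← Equiv.sum_comp (Tuple.sort y)]
  simp [tildeW, ggf, sortedAsc, Finset.sum_neg_distrib]

theorem isGreatest_neg_ggf {w : Fin n → ℝ} (hw : Antitone w) (y : Fin n → ℝ) :
    IsGreatest ((· ⬝ᵥ y) '' permutahedron (tildeW w)) (-ggf w y) := by
  obtain ⟨σ, hσ⟩ := exists_perm_tildeW_dotProduct_eq w y
  refine ⟨⟨_, subset_convexHull ℝ _ ⟨σ, rfl⟩, hσ⟩, ?_⟩
  rintro _ ⟨u, hu, rfl⟩
  refine convexHull_min ?_ (convex_halfSpace_le (f := (· ⬝ᵥ y))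
    ⟨(add_dotProduct · · y), (smul_dotProduct · · y)⟩ _) hu
  rintro _ ⟨τ, rfl⟩
  exact perm_tildeW_dotProduct_le hw τ y

end GiniSupport

section Euclidean

open WithLp

variable {n : ℕ}

theorem norm_toLp_sub_toLp (x y : Fin n → ℝ) :
    ‖toLp 2 x - toLp 2 y‖ = √(∑ i, (x i - y i) ^ 2) := by
  simp [← dist_eq_norm, EuclideanSpace.dist_eq, Real.dist_eq, sq_abs]

theorem IsProjOn.isMinOn {C : Set (Fin n → ℝ)} {z y : Fin n → ℝ} (h : IsProjOn C z y) :
    IsMinOn (‖toLp 2 z - ·‖) (ofLp ⁻¹' C) (toLp 2 y) := isMinOn_iff.2 fun u hu => by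
  simpa only [← norm_toLp_sub_toLp, toLp_ofLp] using h.2 _ hu

theorem moreau_eq_moreauEnvelope (β : ℝ) (h : (Fin n → ℝ) → ℝ) :
    moreau β h = moreauEnvelope β (fun y => h (ofLp y)) ∘ toLp 2 := by
  ext z
  rw [Function.comp_apply, moreauEnvelope, ← (WithLp.equiv 2 (Fin n → ℝ)).symm.iInf_comp]
  simp [moreau, norm_toLp_sub_toLp, Finset.sum_nonneg, sq_nonneg]

theorem isSupportFunction_neg_ggf {w : Fin n → ℝ} (hw : Antitone w) :
    IsSupportFunction (ofLp ⁻¹' permutahedron (tildeW w))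
      (fun y : EuclideanSpace ℝ (Fin n) => -ggf w (ofLp y)) := by
  intro y
  have : (⟪·, y⟫) = (· ⬝ᵥ ofLp y) ∘ ofLp := by
    ext u
    simp [EuclideanSpace.inner_eq_star_dotProduct, dotProduct_comm]
  rw [this, Set.image_comp, Set.image_preimage_eq _ (WithLp.ofLp_surjective 2)]
  exact isGreatest_neg_ggf hw _

end Euclidean

open WithLp in
theorem moreau_gradient_general {n : ℕ} (w : Fin n → ℝ) (hw : Antitone w)
    (β : ℝ) (hβ : 0 < β) (proj : (Fin n → ℝ) → (Fin n → ℝ))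
    (hproj : ∀ z, IsProjOn (permutahedron (tildeW w)) z (proj z)) :
    (∀ z : Fin n → ℝ,
      DifferentiableAt ℝ (moreau β (fun v => -(ggf w v))) z ∧
      ∀ d : Fin n → ℝ,
        fderiv ℝ (moreau β (fun v => -(ggf w v))) z d =
          ∑ i, proj (fun j => z j / β) i * d i) ∧
    (∀ z z' : Fin n → ℝ,
      Real.sqrt (∑ i, (proj (fun j => z j / β) i - proj (fun j => z' j / β) i) ^ 2) ≤
        (1 / β) * Real.sqrt (∑ i, (z i - z' i) ^ 2)) := by
  set C : Set (EuclideanSpace ℝ (Fin n)) := ofLp ⁻¹' permutahedron (tildeW w)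
  set P : EuclideanSpace ℝ (Fin n) → EuclideanSpace ℝ (Fin n) :=
    fun z => toLp 2 (proj (ofLp z))
  have hC : Convex ℝ C :=
    (convex_convexHull ℝ _).linear_preimage (WithLp.linearEquiv 2 ℝ _).toLinearMap
  have hPC : ∀ z, P z ∈ C := fun z => (hproj _).1
  have hPmin : ∀ z, IsMinOn (‖z - ·‖) C (P z) := fun z => (hproj _).isMinOn
  have hP : ∀ z : Fin n → ℝ, P (β⁻¹ • toLp 2 z) = toLp 2 (proj fun j => z j / β) := by
    intro z
    simp only [P, ofLp_smul]
    congr 2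
    ext j
    simp [div_eq_inv_mul]
  refine ⟨fun z => ?_, fun z z' => ?_⟩
  · rw [moreau_eq_moreauEnvelope]
    have hd := ((isSupportFunction_neg_ggf hw).hasFDerivAt_moreauEnvelope hβ hC hPC hPmin
      (toLp 2 z)).comp z (EuclideanSpace.equiv (Fin n) ℝ).symm.hasFDerivAt
    refine ⟨hd.differentiableAt, fun d => ?_⟩
    simp [hd.fderiv, hP, EuclideanSpace.inner_eq_star_dotProduct, dotProduct, mul_comm]
  · simpa only [hP, norm_toLp_sub_toLp, one_div] using
      norm_sub_le_of_isMinOn_smul hβ hC hPC hPmin (toLp 2 z) (toLp 2 z')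

/-- For `w_1 ≥ ... ≥ w_n ≥ 0`, `h = −g_w` and `β > 0`: the Moreau envelope `h^β` is
differentiable with gradient `∇h^β(z) = proj_{P(w̃)}(z/β)` (expressed through its directional
derivatives `Dh^β(z)[d] = ⟨proj_{P(w̃)}(z/β), d⟩`), and the gradient is `(1/β)`-Lipschitz
for the Euclidean norm. -/
theorem moreau_gradient {n : ℕ} (w : Fin n → ℝ) (hw : Antitone w) (hw0 : ∀ i, 0 ≤ w i)
    (β : ℝ) (hβ : 0 < β) (proj : (Fin n → ℝ) → (Fin n → ℝ))
    (hproj : ∀ z, IsProjOn (permutahedron (tildeW w)) z (proj z)) :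
    (∀ z : Fin n → ℝ,
      DifferentiableAt ℝ (moreau β (fun v => -(ggf w v))) z ∧
      ∀ d : Fin n → ℝ,
        fderiv ℝ (moreau β (fun v => -(ggf w v))) z d =
          ∑ i, proj (fun j => z j / β) i * d i) ∧
    (∀ z z' : Fin n → ℝ,
      Real.sqrt (∑ i, (proj (fun j => z j / β) i - proj (fun j => z' j / β) i) ^ 2) ≤
        (1 / β) * Real.sqrt (∑ i, (z i - z' i) ^ 2)) :=
  moreau_gradient_general w hw β hβ proj hproj
end

section
/- (Proposition 2.) Fix n, m ∈ ℕ, values μ_{ij} ∈ [0,1], exposure weights b ∈ ℝ^m with b_1 ≥ ... ≥ b_m ≥ 0, weights w ∈ ℝ^n with w_1 ≥ ... ≥ w_n ≥ 0, w̃_i = −w_{n+1−i}, β > 0, and let h(z) = −g_w(z). Define the linear map u : ℝ^{n×m×m} → ℝ^n by u_i(P) = Σ_{j,k} μ_{ij} P_{ijk} b_k, and let f^β(P) = h^β(u(P)). Then f^β is differentiable, and for every P ∈ ℝ^{n×m×m} and all indices (i,j,k), ∂f^β/∂P_{ijk}(P) = y_i · μ_{ij} · b_k, where y = proj_{P(w̃)}(u(P)/β).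 -/
/-- The user utilities `u_i(P) = Σ_{j,k} μ_{ij} P_{ijk} b_k`. -/
noncomputable def uutil {n m : ℕ} (μ : Fin n → Fin m → ℝ) (b : Fin m → ℝ)
    (P : Fin n → Fin m → Fin m → ℝ) : Fin n → ℝ :=
  fun i => ∑ j, ∑ k, μ i j * P i j k * b k

namespace GMUaux

variable {n : ℕ}


/-- Rearrangement: ggf is the min over permutations. -/
lemma ggf_le_perm {w : Fin n → ℝ} (hw : Antitone w) (z : Fin n → ℝ) (π : Equiv.Perm (Fin n)) :
    ggf w z ≤ ∑ i, w i * z (π i) := by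
  have hmono : Monotone (sortedAsc z) := Tuple.monotone_sort z
  have hanti : Antivary w (sortedAsc z) := by
    intro i j hij
    exact hw (le_of_not_gt fun hlt => absurd (hmono hlt.le) (not_le.mpr hij))
  have := hanti.sum_mul_le_sum_mul_comp_perm (σ := π.trans (Tuple.sort z).symm)
  calc ggf w z ≤ ∑ i, w i * sortedAsc z ((π.trans (Tuple.sort z).symm) i) := this
    _ = ∑ i, w i * z (π i) := by
        apply Finset.sum_congr rfl
        intro i _
        simp [sortedAsc, Equiv.trans_apply, Equiv.apply_symm_apply]

/-- Support: every point of the permutahedron gives a lower linear bound for -ggf. -/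
lemma dot_le_negggf {w : Fin n → ℝ} (hw : Antitone w) {c : Fin n → ℝ}
    (hc : c ∈ permutahedron (tildeW w)) (z : Fin n → ℝ) :
    ∑ i, c i * z i ≤ -(ggf w z) := by
  have hlin : IsLinearMap ℝ (fun c : Fin n → ℝ => ∑ i, c i * z i) := by
    constructor
    · intro a b; simp [add_mul, Finset.sum_add_distrib]
    · intro r a; simp [Finset.mul_sum, mul_assoc]
  have hconv : Convex ℝ {c : Fin n → ℝ | ∑ i, c i * z i ≤ -(ggf w z)} :=
    convex_halfSpace_le hlin _
  refine convexHull_min ?_ hconv hc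
  rintro c ⟨σ, rfl⟩
  show ∑ i, (tildeW w ∘ σ) i * z i ≤ -(ggf w z)
  have h1 : ∑ i, (tildeW w ∘ σ) i * z i = -∑ i, w (Fin.rev (σ i)) * z i := by
    rw [← Finset.sum_neg_distrib]
    apply Finset.sum_congr rfl; intro i _; simp [tildeW]
  rw [h1, neg_le_neg_iff]
  set e : Equiv.Perm (Fin n) := Fin.revPerm.trans σ.symm with he
  have h2 : ∑ i, w (Fin.rev (σ i)) * z i = ∑ j, w j * z (e j) := by
    rw [← Equiv.sum_comp e (fun i => w (Fin.rev (σ i)) * z i)]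
    apply Finset.sum_congr rfl
    intro j _
    simp [he, Equiv.trans_apply, Fin.revPerm_apply, Fin.rev_rev]
  rw [h2]
  exact ggf_le_perm hw z e

/-- Attainment: -ggf equals a vertex linear functional. -/
lemma negggf_attained (w z : Fin n → ℝ) :
    ∃ c ∈ permutahedron (tildeW w), ∑ i, c i * z i = -(ggf w z) := by
  refine ⟨tildeW w ∘ ((Tuple.sort z).symm.trans Fin.revPerm),
    subset_convexHull ℝ _ ⟨_, rfl⟩, ?_⟩
  have h1 : ∀ i, (tildeW w ∘ ((Tuple.sort z).symm.trans Fin.revPerm)) i * z i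
      = -(w ((Tuple.sort z).symm i) * z i) := by
    intro i
    simp [tildeW, Equiv.trans_apply, Fin.revPerm_apply, Fin.rev_rev]
  rw [Finset.sum_congr rfl (fun i _ => h1 i), Finset.sum_neg_distrib]
  congr 1
  rw [← Equiv.sum_comp (Tuple.sort z) (fun i => w ((Tuple.sort z).symm i) * z i)]
  apply Finset.sum_congr rfl
  intro j _
  simp [ggf, sortedAsc]



/-- Variational inequality for projections onto convex sets. -/
lemma variational {C : Set (Fin n → ℝ)} (hC : Convex ℝ C) {z y : Fin n → ℝ}
    (hp : IsProjOn C z y) {c : Fin n → ℝ} (hc : c ∈ C) :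
    ∑ i, (z i - y i) * (c i - y i) ≤ 0 := by
  obtain ⟨hyC, hmin⟩ := hp
  set A := ∑ i, (z i - y i) * (c i - y i) with hA
  set B := ∑ i, (c i - y i) ^ 2 with hB
  have hB0 : 0 ≤ B := Finset.sum_nonneg fun i _ => sq_nonneg _
  have key : ∀ t : ℝ, 0 ≤ t → t ≤ 1 → 2 * t * A ≤ t ^ 2 * B := by
    intro t ht0 ht1
    have hmem : (fun i => y i + t * (c i - y i)) ∈ C := by
      have h := hC hyC hc (by linarith : (0:ℝ) ≤ 1 - t) ht0 (by ring)
      convert h using 1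
      funext i
      simp only [Pi.add_apply, Pi.smul_apply, smul_eq_mul]
      ring
    have hs := hmin _ hmem
    have hnn : (0:ℝ) ≤ ∑ i, (z i - (y i + t * (c i - y i))) ^ 2 :=
      Finset.sum_nonneg fun i _ => sq_nonneg _
    have h2 : ∑ i, (z i - y i) ^ 2 ≤ ∑ i, (z i - (y i + t * (c i - y i))) ^ 2 :=
      (Real.sqrt_le_sqrt_iff hnn).mp hs
    have hexp : ∑ i, (z i - (y i + t * (c i - y i))) ^ 2
        = ∑ i, (z i - y i) ^ 2 - 2 * t * A + t ^ 2 * B := by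
      rw [hA, hB, Finset.mul_sum, Finset.mul_sum, ← Finset.sum_sub_distrib,
        ← Finset.sum_add_distrib]
      apply Finset.sum_congr rfl
      intro i _
      ring
    linarith
  by_contra hA0
  push_neg at hA0
  rcases eq_or_lt_of_le hB0 with hBz | hBpos
  · have := key 1 zero_le_one le_rfl
    rw [← hBz] at this
    nlinarith
  · set t := min 1 (A / B) with ht
    have ht0 : 0 < t := lt_min one_pos (div_pos hA0 hBpos)
    have ht1 : t ≤ 1 := min_le_left _ _
    have htAB : t ≤ A / B := min_le_right _ _
    have htB : t * B ≤ A := by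
      rw [← le_div_iff₀ hBpos] at *
      exact htAB
    have hk := key t ht0.le ht1
    nlinarith

/-- Firm nonexpansiveness inequality. -/
lemma firm {C : Set (Fin n → ℝ)} (hC : Convex ℝ C) {z₁ z₂ y₁ y₂ : Fin n → ℝ}
    (h1 : IsProjOn C z₁ y₁) (h2 : IsProjOn C z₂ y₂) :
    ∑ i, (y₁ i - y₂ i) ^ 2 ≤ ∑ i, (y₁ i - y₂ i) * (z₁ i - z₂ i) := by
  have v1 := variational hC h1 h2.1
  have v2 := variational hC h2 h1.1
  have hid : ∑ i, (y₁ i - y₂ i) * (z₁ i - z₂ i)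
      = ∑ i, (y₁ i - y₂ i) ^ 2
        - ∑ i, (z₁ i - y₁ i) * (y₂ i - y₁ i)
        - ∑ i, (z₂ i - y₂ i) * (y₁ i - y₂ i) := by
    rw [← Finset.sum_sub_distrib, ← Finset.sum_sub_distrib]
    apply Finset.sum_congr rfl
    intro i _
    ring
  linarith



/-- Each Moreau term is bounded below by the linear-quadratic lower bound. -/
lemma term_ge {h : (Fin n → ℝ) → ℝ} {β : ℝ} (hβ : 0 < β) {c : Fin n → ℝ}
    (hc : ∀ z', ∑ i, c i * z' i ≤ h z') (z z' : Fin n → ℝ) :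
    ∑ i, c i * z i - β / 2 * ∑ i, c i ^ 2
      ≤ h z' + (∑ i, (z i - z' i) ^ 2) / (2 * β) := by
  have h1 := hc z'
  have key : (0:ℝ) ≤ ∑ i, (z i - z' i - β * c i) ^ 2 :=
    Finset.sum_nonneg fun i _ => sq_nonneg _
  have hexp : ∑ i, (z i - z' i - β * c i) ^ 2
      = ∑ i, (z i - z' i) ^ 2 - 2 * β * (∑ i, c i * z i - ∑ i, c i * z' i)
        + β ^ 2 * ∑ i, c i ^ 2 := by
    rw [Finset.mul_sum, mul_sub, Finset.mul_sum, Finset.mul_sum, ← Finset.sum_sub_distrib,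
      ← Finset.sum_sub_distrib, ← Finset.sum_add_distrib]
    apply Finset.sum_congr rfl
    intro i _
    ring
  have h2β : (0:ℝ) < 2 * β := by linarith
  have hmul : (∑ i, c i * z i - β / 2 * ∑ i, c i ^ 2 - h z') * (2 * β)
      ≤ ∑ i, (z i - z' i) ^ 2 := by nlinarith
  have := (le_div_iff₀ h2β).mpr hmul
  linarith

lemma moreau_bddBelow {n : ℕ} {h : (Fin n → ℝ) → ℝ} {β : ℝ} (hβ : 0 < β) {c : Fin n → ℝ}
    (hc : ∀ z', ∑ i, c i * z' i ≤ h z') (z : Fin n → ℝ) :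
    BddBelow (Set.range fun z' => h z' + (∑ i, (z i - z' i) ^ 2) / (2 * β)) := by
  refine ⟨∑ i, c i * z i - β / 2 * ∑ i, c i ^ 2, ?_⟩
  rintro _ ⟨z', rfl⟩
  exact term_ge hβ hc z z'

lemma moreau_ge {n : ℕ} {h : (Fin n → ℝ) → ℝ} {β : ℝ} (hβ : 0 < β) {c : Fin n → ℝ}
    (hc : ∀ z', ∑ i, c i * z' i ≤ h z') (z : Fin n → ℝ) :
    ∑ i, c i * z i - β / 2 * ∑ i, c i ^ 2 ≤ moreau β h z :=
  le_ciInf (term_ge hβ hc z)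

/-- The value of the Moreau envelope of -ggf. -/
lemma moreau_eq {n : ℕ} {w : Fin n → ℝ} (hw : Antitone w) {β : ℝ} (hβ : 0 < β)
    {z y : Fin n → ℝ} (hp : IsProjOn (permutahedron (tildeW w)) (fun i => z i / β) y) :
    moreau β (fun v => -(ggf w v)) z = ∑ i, y i * z i - β / 2 * ∑ i, y i ^ 2 := by
  have hC : Convex ℝ (permutahedron (tildeW w)) := convex_convexHull ℝ _
  have hyC := hp.1
  have hsup : ∀ z', ∑ i, y i * z' i ≤ -(ggf w z') := fun z' => dot_le_negggf hw hyC z'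
  refine le_antisymm ?_ (moreau_ge hβ hsup z)
  -- upper bound: evaluate at z' = z - β • y
  have hb := moreau_bddBelow (h := fun v => -(ggf w v)) hβ hsup z
  have hle := ciInf_le hb (fun i => z i - β * y i)
  -- compute h (z - βy) = ∑ y i * (z i - β y i)
  obtain ⟨c₀, hc₀C, hc₀⟩ := negggf_attained w (fun i => z i - β * y i)
  have hvi := variational hC hp hc₀C
  have hvi' : ∑ i, (z i - β * y i) * (c₀ i - y i) ≤ 0 := by
    have : ∑ i, (z i - β * y i) * (c₀ i - y i)
        = β * ∑ i, (z i / β - y i) * (c₀ i - y i) := by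
      rw [Finset.mul_sum]
      apply Finset.sum_congr rfl
      intro i _
      field_simp
    rw [this]
    exact mul_nonpos_of_nonneg_of_nonpos hβ.le hvi
  have hsub : ∀ a b : Fin n → ℝ, ∑ i, a i * (b i - y i) = ∑ i, a i * b i - ∑ i, a i * y i := by
    intro a b
    rw [← Finset.sum_sub_distrib]
    exact Finset.sum_congr rfl fun i _ => by ring
  have hval : -(ggf w (fun i => z i - β * y i)) = ∑ i, y i * (z i - β * y i) := by
    refine le_antisymm ?_ (hsup _)
    rw [← hc₀]
    have e1 : ∑ i, (z i - β * y i) * (c₀ i - y i)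
        = ∑ i, c₀ i * (z i - β * y i) - ∑ i, y i * (z i - β * y i) := by
      rw [← Finset.sum_sub_distrib]
      exact Finset.sum_congr rfl fun i _ => by ring
    linarith [hvi', e1 ▸ hvi']
  have hq : ∑ i, (z i - (z i - β * y i)) ^ 2 = β ^ 2 * ∑ i, y i ^ 2 := by
    rw [Finset.mul_sum]
    exact Finset.sum_congr rfl fun i _ => by ring
  have hlin : ∑ i, y i * (z i - β * y i) = ∑ i, y i * z i - β * ∑ i, y i ^ 2 := by
    rw [Finset.mul_sum, ← Finset.sum_sub_distrib]
    exact Finset.sum_congr rfl fun i _ => by ring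
  calc moreau β (fun v => -(ggf w v)) z
      ≤ -(ggf w (fun i => z i - β * y i))
        + (∑ i, (z i - (z i - β * y i)) ^ 2) / (2 * β) := hle
    _ = ∑ i, y i * z i - β / 2 * ∑ i, y i ^ 2 := by
        rw [hval, hq, hlin]
        field_simp
        ring


/-- The continuous linear functional `v ↦ ∑ i, y i * v i`. -/
noncomputable def dotCLM {n : ℕ} (y : Fin n → ℝ) : (Fin n → ℝ) →L[ℝ] ℝ :=
  ∑ i, y i • (ContinuousLinearMap.proj i : (Fin n → ℝ) →L[ℝ] ℝ)

lemma dotCLM_apply {n : ℕ} (y v : Fin n → ℝ) : dotCLM y v = ∑ i, y i * v i := by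
  simp [dotCLM, ContinuousLinearMap.sum_apply]

/-- Key quantitative bound for the Moreau envelope of -ggf. -/
lemma moreau_bound {n : ℕ} {w : Fin n → ℝ} (hw : Antitone w) {β : ℝ} (hβ : 0 < β)
    (proj : (Fin n → ℝ) → (Fin n → ℝ))
    (hproj : ∀ z, IsProjOn (permutahedron (tildeW w)) z (proj z))
    (z z₂ : Fin n → ℝ) :
    0 ≤ moreau β (fun v => -(ggf w v)) z₂ - moreau β (fun v => -(ggf w v)) z
        - ∑ i, proj (fun i => z i / β) i * (z₂ i - z i) ∧
    moreau β (fun v => -(ggf w v)) z₂ - moreau β (fun v => -(ggf w v)) z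
        - ∑ i, proj (fun i => z i / β) i * (z₂ i - z i)
      ≤ (∑ i, (z₂ i - z i) ^ 2) / β := by
  have hC : Convex ℝ (permutahedron (tildeW w)) := convex_convexHull ℝ _
  set y := proj (fun i => z i / β) with hy
  set y₂ := proj (fun i => z₂ i / β) with hy2
  have hpz := hproj (fun i => z i / β)
  have hpz2 := hproj (fun i => z₂ i / β)
  have hsupy : ∀ z', ∑ i, y i * z' i ≤ -(ggf w z') := fun z' => dot_le_negggf hw hpz.1 z'
  have hsupy2 : ∀ z', ∑ i, y₂ i * z' i ≤ -(ggf w z') := fun z' => dot_le_negggf hw hpz2.1 z'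
  have hFz : moreau β (fun v => -(ggf w v)) z = ∑ i, y i * z i - β / 2 * ∑ i, y i ^ 2 :=
    moreau_eq hw hβ hpz
  have hFz2 : moreau β (fun v => -(ggf w v)) z₂ = ∑ i, y₂ i * z₂ i - β / 2 * ∑ i, y₂ i ^ 2 :=
    moreau_eq hw hβ hpz2
  have hlow : ∑ i, y i * z₂ i - β / 2 * ∑ i, y i ^ 2 ≤ moreau β (fun v => -(ggf w v)) z₂ :=
    moreau_ge hβ hsupy z₂
  have hlow2 : ∑ i, y₂ i * z i - β / 2 * ∑ i, y₂ i ^ 2 ≤ moreau β (fun v => -(ggf w v)) z :=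
    moreau_ge hβ hsupy2 z
  have hsplit : ∀ c : Fin n → ℝ, ∑ i, c i * (z₂ i - z i) = ∑ i, c i * z₂ i - ∑ i, c i * z i := by
    intro c
    rw [← Finset.sum_sub_distrib]
    exact Finset.sum_congr rfl fun i _ => by ring
  constructor
  · rw [hFz, hsplit]
    linarith
  · -- upper bound
    have hub : moreau β (fun v => -(ggf w v)) z₂ - moreau β (fun v => -(ggf w v)) z
        - ∑ i, y i * (z₂ i - z i) ≤ ∑ i, (y₂ i - y i) * (z₂ i - z i) := by
      have e : ∑ i, (y₂ i - y i) * (z₂ i - z i)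
          = ∑ i, y₂ i * (z₂ i - z i) - ∑ i, y i * (z₂ i - z i) := by
        rw [← Finset.sum_sub_distrib]
        exact Finset.sum_congr rfl fun i _ => by ring
      rw [e, hsplit, hsplit, hFz2]
      linarith
    -- nonexpansiveness
    have hfirm := firm hC hpz2 hpz
    have hfirm' : β * ∑ i, (y₂ i - y i) ^ 2 ≤ ∑ i, (y₂ i - y i) * (z₂ i - z i) := by
      have e : ∑ i, (y₂ i - y i) * ((fun i => z₂ i / β) i - (fun i => z i / β) i)
          = (∑ i, (y₂ i - y i) * (z₂ i - z i)) / β := by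
        rw [Finset.sum_div]
        apply Finset.sum_congr rfl
        intro i _
        field_simp
      rw [e] at hfirm
      rw [← le_div_iff₀' hβ]
      exact hfirm
    have hcs := Finset.sum_mul_sq_le_sq_mul_sq Finset.univ (fun i => y₂ i - y i)
      (fun i => z₂ i - z i)
    set D := ∑ i, (y₂ i - y i) * (z₂ i - z i) with hD
    set Q := ∑ i, (y₂ i - y i) ^ 2 with hQ
    set S := ∑ i, (z₂ i - z i) ^ 2 with hS
    have hS0 : 0 ≤ S := Finset.sum_nonneg fun i _ => sq_nonneg _
    have hQ0 : 0 ≤ Q := Finset.sum_nonneg fun i _ => sq_nonneg _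
    have hDS : D ≤ S / β := by
      rcases le_or_gt D 0 with hD0 | hD0
      · exact hD0.trans (div_nonneg hS0 hβ.le)
      · rw [le_div_iff₀ hβ]
        nlinarith
    linarith

/-- Differentiability of the Moreau envelope of -ggf, with gradient the projection. -/
lemma hasFDerivAt_moreau {n : ℕ} {w : Fin n → ℝ} (hw : Antitone w) {β : ℝ} (hβ : 0 < β)
    (proj : (Fin n → ℝ) → (Fin n → ℝ))
    (hproj : ∀ z, IsProjOn (permutahedron (tildeW w)) z (proj z))
    (z : Fin n → ℝ) :
    HasFDerivAt (fun v => moreau β (fun v => -(ggf w v)) v)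
      (dotCLM (proj (fun i => z i / β))) z := by
  rw [hasFDerivAt_iff_isLittleO_nhds_zero]
  rw [Asymptotics.isLittleO_iff]
  intro c hc
  have hδ : (0:ℝ) < c * β / (n + 1) := by positivity
  rw [Metric.eventually_nhds_iff]
  refine ⟨c * β / (n + 1), hδ, ?_⟩
  intro h hh
  rw [dist_zero_right] at hh
  have hb := moreau_bound hw hβ proj hproj z (z + h)
  have hE : ∀ i, (z + h) i - z i = h i := fun i => by simp
  have hsum1 : ∑ i, proj (fun i => z i / β) i * ((z + h) i - z i)
      = dotCLM (proj (fun i => z i / β)) h := by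
    rw [dotCLM_apply]
    exact Finset.sum_congr rfl fun i _ => by rw [hE]
  have hsum2 : ∑ i, ((z + h) i - z i) ^ 2 = ∑ i, h i ^ 2 := by
    exact Finset.sum_congr rfl fun i _ => by rw [hE]
  rw [hsum1, hsum2] at hb
  obtain ⟨hb1, hb2⟩ := hb
  have habs : ‖moreau β (fun v => -(ggf w v)) (z + h) - moreau β (fun v => -(ggf w v)) z
      - dotCLM (proj (fun i => z i / β)) h‖ ≤ (∑ i, h i ^ 2) / β := by
    rw [Real.norm_eq_abs, abs_le]
    constructor
    · have : (0:ℝ) ≤ (∑ i, h i ^ 2) / β :=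
        div_nonneg (Finset.sum_nonneg fun i _ => sq_nonneg _) hβ.le
      linarith
    · exact hb2
  have hS : ∑ i, h i ^ 2 ≤ (n : ℝ) * ‖h‖ ^ 2 := by
    calc ∑ i, h i ^ 2 ≤ ∑ _i : Fin n, ‖h‖ ^ 2 := by
          apply Finset.sum_le_sum
          intro i _
          have := norm_le_pi_norm h i
          have h0 : (0:ℝ) ≤ ‖h i‖ := norm_nonneg _
          calc h i ^ 2 = ‖h i‖ ^ 2 := by rw [Real.norm_eq_abs, sq_abs]
            _ ≤ ‖h‖ ^ 2 := by nlinarith [norm_nonneg h]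
      _ = (n : ℝ) * ‖h‖ ^ 2 := by simp [Finset.sum_const, Finset.card_univ, mul_comm]
  calc ‖moreau β (fun v => -(ggf w v)) (z + h) - moreau β (fun v => -(ggf w v)) z
      - dotCLM (proj (fun i => z i / β)) h‖ ≤ (∑ i, h i ^ 2) / β := habs
    _ ≤ (n : ℝ) * ‖h‖ ^ 2 / β := by
        exact (div_le_div_iff_of_pos_right hβ).mpr hS
    _ ≤ c * ‖h‖ := by
        rw [div_le_iff₀ hβ]
        have h1 : ‖h‖ * ((n : ℝ) + 1) ≤ c * β := by
          rw [← le_div_iff₀ (by positivity : (0:ℝ) < (n:ℝ) + 1)]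
          exact le_of_lt (by simpa [mul_comm, div_eq_mul_inv, mul_assoc] using hh)
        nlinarith [mul_nonneg (sub_nonneg.mpr h1) (norm_nonneg h), norm_nonneg h]

/-- The utility map as a continuous linear map. -/
noncomputable def uCLM {n m : ℕ} (μ : Fin n → Fin m → ℝ) (b : Fin m → ℝ) :
    (Fin n → Fin m → Fin m → ℝ) →L[ℝ] (Fin n → ℝ) :=
  ContinuousLinearMap.pi fun i => ∑ j, ∑ k, (μ i j * b k) •
    ((ContinuousLinearMap.proj k).comp
      ((ContinuousLinearMap.proj j).comp
        (ContinuousLinearMap.proj i : (Fin n → Fin m → Fin m → ℝ) →L[ℝ] (Fin m → Fin m → ℝ))))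

lemma uCLM_apply {n m : ℕ} (μ : Fin n → Fin m → ℝ) (b : Fin m → ℝ)
    (P : Fin n → Fin m → Fin m → ℝ) : uCLM μ b P = uutil μ b P := by
  funext i
  simp only [uCLM, uutil, ContinuousLinearMap.pi_apply, ContinuousLinearMap.sum_apply,
    ContinuousLinearMap.smul_apply, ContinuousLinearMap.comp_apply,
    ContinuousLinearMap.proj_apply, smul_eq_mul]
  apply Finset.sum_congr rfl
  intro j _
  apply Finset.sum_congr rfl
  intro k _
  ring


end GMUaux

open GMUaux in
/-- (Proposition 2.) With `h = −g_w`, `f^β(P) = h^β(u(P))` is differentiable and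
`∂f^β/∂P_{ijk}(P) = y_i μ_{ij} b_k` where `y = proj_{P(w̃)}(u(P)/β)`. -/
theorem grad_moreau_of_utilities {n m : ℕ} (μ : Fin n → Fin m → ℝ)
    (hμ : ∀ i j, μ i j ∈ Set.Icc (0 : ℝ) 1)
    (b : Fin m → ℝ) (hb : Antitone b) (hb0 : ∀ k, 0 ≤ b k)
    (w : Fin n → ℝ) (hw : Antitone w) (hw0 : ∀ i, 0 ≤ w i)
    (β : ℝ) (hβ : 0 < β)
    (proj : (Fin n → ℝ) → (Fin n → ℝ))
    (hproj : ∀ z, IsProjOn (permutahedron (tildeW w)) z (proj z))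
    (P : Fin n → Fin m → Fin m → ℝ) :
    DifferentiableAt ℝ
      (fun Q : Fin n → Fin m → Fin m → ℝ => moreau β (fun v => -(ggf w v)) (uutil μ b Q))
      P ∧
    ∀ (i : Fin n) (j k : Fin m),
      fderiv ℝ
        (fun Q : Fin n → Fin m → Fin m → ℝ => moreau β (fun v => -(ggf w v)) (uutil μ b Q))
        P (fun i' j' k' => if i' = i ∧ j' = j ∧ k' = k then (1 : ℝ) else 0) =
      proj (fun i' => uutil μ b P i' / β) i * μ i j * b k := by
  set y := proj (fun i' => uutil μ b P i' / β) with hy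
  have hfe : (fun Q : Fin n → Fin m → Fin m → ℝ => moreau β (fun v => -(ggf w v)) (uutil μ b Q))
      = fun Q => moreau β (fun v => -(ggf w v)) (uCLM μ b Q) := by
    funext Q
    rw [uCLM_apply]
  have hF : HasFDerivAt (fun v => moreau β (fun v => -(ggf w v)) v)
      (dotCLM y) (uCLM μ b P) := by
    rw [uCLM_apply]
    exact hasFDerivAt_moreau hw hβ proj hproj (uutil μ b P)
  have hcomp : HasFDerivAt
      (fun Q : Fin n → Fin m → Fin m → ℝ => moreau β (fun v => -(ggf w v)) (uCLM μ b Q))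
      ((dotCLM y).comp (uCLM μ b)) P :=
    hF.comp P (uCLM μ b).hasFDerivAt
  rw [hfe]
  refine ⟨hcomp.differentiableAt, ?_⟩
  intro i j k
  rw [hcomp.fderiv]
  rw [ContinuousLinearMap.comp_apply, dotCLM_apply]
  have hUe : ∀ i' : Fin n,
      uCLM μ b (fun i' j' k' => if i' = i ∧ j' = j ∧ k' = k then (1 : ℝ) else 0) i'
      = if i' = i then μ i j * b k else 0 := by
    intro i'
    rw [uCLM_apply]
    simp only [uutil]
    by_cases hii : i' = i
    · subst hii
      simp only [true_and]
      rw [Finset.sum_eq_single j]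
      · rw [Finset.sum_eq_single k]
        · simp
        · intro k' _ hk'; simp [hk']
        · intro hk; exact absurd (Finset.mem_univ k) hk
      · intro j' _ hj'; simp [hj']
      · intro hj; exact absurd (Finset.mem_univ j) hj
    · simp [hii]
  calc ∑ i', y i' * uCLM μ b (fun i' j' k' => if i' = i ∧ j' = j ∧ k' = k then (1 : ℝ) else 0) i'
      = ∑ i', y i' * (if i' = i then μ i j * b k else 0) := by
        exact Finset.sum_congr rfl fun i' _ => by rw [hUe]
    _ = y i * μ i j * b k := by
        rw [Finset.sum_eq_single i]
        · simp [mul_assoc]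
        · intro i' _ hi'; simp [hi']
        · intro hi; exact absurd (Finset.mem_univ i) hi
end

section
/- (Core of Proposition 5: linear minimization over doubly stochastic matrices by sorting.) Let c ∈ ℝ^m and b ∈ ℝ^m with b_1 ≥ b_2 ≥ ... ≥ b_m ≥ 0. Then for every m×m doubly stochastic matrix Q, Σ_{j,k} c_j b_k Q_{jk} ≥ Σ_{k=1}^m c^↑_k b_k, and equality holds when Q is the permutation matrix of any permutation τ with c_{τ(1)} ≤ ... ≤ c_{τ(m)} (i.e. Q_{jk} = 1 iff j = τ(k)). In particular, the minimum of P ↦ Σ_{j,k} c_j b_k P_{jk} over all doubly stochastic matrices is attained at a permutation matrix that sorts c in increasing order. -/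
/-- `Q` is a doubly stochastic `m × m` matrix: nonnegative entries, and all rows and
columns sum to `1`. -/
def IsDoublyStochastic {m : ℕ} (Q : Fin m → Fin m → ℝ) : Prop :=
  (∀ j k, 0 ≤ Q j k) ∧ (∀ j, ∑ k, Q j k = 1) ∧ (∀ k, ∑ j, Q j k = 1)

open Matrix

theorem le_of_mem_doublyStochastic {R n : Type*} [Field R] [LinearOrder R]
    [IsStrictOrderedRing R] [Fintype n] [DecidableEq n] {f : Matrix n n R → R}
    (hf : IsLinearMap R f) {a : R} (hperm : ∀ σ : Equiv.Perm n, a ≤ f (σ.permMatrix R))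
    {Q : Matrix n n R} (hQ : Q ∈ doublyStochastic R n) : a ≤ f Q := by
  rw [← SetLike.mem_coe, doublyStochastic_eq_convexHull_permMatrix] at hQ
  refine convexHull_min ?_ (convex_halfSpace_ge hf a) hQ
  rintro _ ⟨σ, rfl⟩
  exact hperm σ

theorem isLinearMap_dotProduct_mulVec {R n : Type*} [CommSemiring R] [Fintype n] (c b : n → R) :
    IsLinearMap R fun Q : Matrix n n R => c ⬝ᵥ Q *ᵥ b where
  map_add Q P := by rw [add_mulVec, dotProduct_add]
  map_smul r Q := by rw [smul_mulVec, dotProduct_smul]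

theorem sum_sum_mul_eq_dotProduct_mulVec {R n : Type*} [CommSemiring R] [Fintype n]
    (c b : n → R) (Q : n → n → R) : ∑ j, ∑ k, c j * b k * Q j k = c ⬝ᵥ of Q *ᵥ b := by
  simp only [dotProduct, mulVec, of_apply, Finset.mul_sum]
  exact Finset.sum_congr rfl fun j _ => Finset.sum_congr rfl fun k _ => by ring

theorem dotProduct_permMatrix_mulVec {R n : Type*} [CommRing R] [Fintype n] [DecidableEq n]
    (σ : Equiv.Perm n) (c b : n → R) :
    c ⬝ᵥ σ.permMatrix R *ᵥ b = ∑ k, c (σ.symm k) * b k := by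
  rw [permMatrix_mulVec, dotProduct]
  simpa using Equiv.sum_comp σ (fun j => c (σ.symm j) * b j)

theorem of_ite_eq_permMatrix_inv {R n : Type*} [Zero R] [One R] [DecidableEq n]
    (τ : Equiv.Perm n) : of (fun j k => if j = τ k then (1 : R) else 0) = τ⁻¹.permMatrix R := by
  ext j k
  simp [Equiv.toPEquiv_apply, ← Equiv.symm_apply_eq]

theorem isDoublyStochastic_iff_mem_doublyStochastic {m : ℕ} {Q : Fin m → Fin m → ℝ} :
    IsDoublyStochastic Q ↔ of Q ∈ doublyStochastic ℝ (Fin m) := by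
  rw [mem_doublyStochastic_iff_sum]
  rfl

theorem sortedAsc_eq_comp_of_monotone {n : ℕ} {c : Fin n → ℝ} {τ : Equiv.Perm (Fin n)}
    (hτ : Monotone (c ∘ τ)) : sortedAsc c = c ∘ τ :=
  (Tuple.comp_sort_eq_comp_iff_monotone.mpr hτ).symm

theorem sum_sortedAsc_mul_le_sum_comp_perm_mul {n : ℕ} (c : Fin n → ℝ) {b : Fin n → ℝ}
    (hb : Antitone b) (σ : Equiv.Perm (Fin n)) :
    ∑ k, sortedAsc c k * b k ≤ ∑ k, c (σ k) * b k := by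
  simpa [sortedAsc] using ((Tuple.monotone_sort c).antivary hb).sum_mul_le_sum_comp_perm_mul
    (σ := σ.trans (Tuple.sort c).symm)

theorem linear_min_doubly_stochastic_general {m : ℕ} (c b : Fin m → ℝ) (hb : Antitone b) :
    (∀ Q : Fin m → Fin m → ℝ, IsDoublyStochastic Q →
      ∑ k, sortedAsc c k * b k ≤ ∑ j, ∑ k, c j * b k * Q j k) ∧
    (∀ τ : Equiv.Perm (Fin m), Monotone (c ∘ τ) →
      IsDoublyStochastic (fun j k => if j = τ k then (1 : ℝ) else 0) ∧
      ∑ j, ∑ k, c j * b k * (if j = τ k then (1 : ℝ) else 0) =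
        ∑ k, sortedAsc c k * b k) := by
  refine ⟨fun Q hQ => ?_, fun τ hτ => ?_⟩
  · rw [sum_sum_mul_eq_dotProduct_mulVec c b Q]
    refine le_of_mem_doublyStochastic (isLinearMap_dotProduct_mulVec c b) (fun σ => ?_)
      (isDoublyStochastic_iff_mem_doublyStochastic.mp hQ)
    rw [dotProduct_permMatrix_mulVec]
    exact sum_sortedAsc_mul_le_sum_comp_perm_mul c hb σ.symm
  · rw [isDoublyStochastic_iff_mem_doublyStochastic, sum_sum_mul_eq_dotProduct_mulVec,
      of_ite_eq_permMatrix_inv, dotProduct_permMatrix_mulVec,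
      sortedAsc_eq_comp_of_monotone hτ]
    exact ⟨permMatrix_mem_doublyStochastic, rfl⟩

/-- (Core of Proposition 5: linear minimization over doubly stochastic matrices by sorting.)
For `c ∈ ℝ^m` and `b_1 ≥ ... ≥ b_m ≥ 0`: every doubly stochastic `Q` satisfies
`Σ_{j,k} c_j b_k Q_{jk} ≥ Σ_k c^↑_k b_k`, and equality holds for the permutation matrix
(`Q_{jk} = 1` iff `j = τ(k)`) of any `τ` sorting `c` in increasing order. Hence the minimum
over doubly stochastic matrices is attained at a permutation matrix sorting `c`. -/
theorem linear_min_doubly_stochastic {m : ℕ} (c b : Fin m → ℝ) (hb : Antitone b)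
    (hb0 : ∀ k, 0 ≤ b k) :
    (∀ Q : Fin m → Fin m → ℝ, IsDoublyStochastic Q →
      ∑ k, sortedAsc c k * b k ≤ ∑ j, ∑ k, c j * b k * Q j k) ∧
    (∀ τ : Equiv.Perm (Fin m), Monotone (c ∘ τ) →
      IsDoublyStochastic (fun j k => if j = τ k then (1 : ℝ) else 0) ∧
      ∑ j, ∑ k, c j * b k * (if j = τ k then (1 : ℝ) else 0) =
        ∑ k, sortedAsc c k * b k) :=
  linear_min_doubly_stochastic_general c b hb
end

section
/- (Proposition 1, part 1.) Fix n users, m items, values μ_{ij} ∈ [0,1], and exposure weights b ∈ ℝ^m with b_1 ≥ ... ≥ b_m ≥ 0. Let λ ∈ (0,1), let w^u ∈ ℝ^n with 1 = w^u_1 > w^u_2 > ... > w^u_n > 0, and w^i ∈ ℝ^m with 1 = w^i_1 > w^i_2 > ... > w^i_m > 0. Define the two-sided GGF F(P) = (1−λ)·g_{w^u}(u(P)) + λ·g_{w^i}(v(P)) over the set 𝒫 of ranking policies. Then every maximizer P* of F over 𝒫 is Lorenz-efficient. -/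
/-- Weak Lorenz dominance: `x ⪰_L x'` iff `X_i ≥ X'_i` for all `i`. -/
def LorenzDomW {n : ℕ} (x x' : Fin n → ℝ) : Prop := ∀ i, lorenz x' i ≤ lorenz x i

/-- Strict Lorenz dominance: `x ≻_L x'` iff `x ⪰_L x'` and `X ≠ X'`. -/
def LorenzDomS {n : ℕ} (x x' : Fin n → ℝ) : Prop := LorenzDomW x x' ∧ lorenz x ≠ lorenz x'

/-- The set `𝒫` of ranking policies: `n`-tuples of doubly stochastic `m × m` matrices. -/
def Policies (n m : ℕ) : Set (Fin n → Fin m → Fin m → ℝ) :=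
  {P | ∀ i, IsDoublyStochastic (P i)}

/-- The item exposures `v_j(P) = Σ_{i,k} P_{ijk} b_k`. -/
noncomputable def iexpo {n m : ℕ} (b : Fin m → ℝ)
    (P : Fin n → Fin m → Fin m → ℝ) : Fin m → ℝ :=
  fun j => ∑ i, ∑ k, P i j k * b k

/-- A ranking policy `P ∈ 𝒫` is Lorenz-efficient if there is no `P' ∈ 𝒫` with
[`u(P') ⪰_L u(P)` and `v(P') ≻_L v(P)`] or [`v(P') ⪰_L v(P)` and `u(P') ≻_L u(P)`]. -/
def LorenzEfficient {n m : ℕ} (μ : Fin n → Fin m → ℝ) (b : Fin m → ℝ)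
    (P : Fin n → Fin m → Fin m → ℝ) : Prop :=
  ¬ ∃ P' ∈ Policies n m,
      (LorenzDomW (uutil μ b P') (uutil μ b P) ∧ LorenzDomS (iexpo b P') (iexpo b P)) ∨
      (LorenzDomW (iexpo b P') (iexpo b P) ∧ LorenzDomS (uutil μ b P') (uutil μ b P))

/-- The Abel-summation coefficient `w i - w (i+1)` (with `w n := 0`). -/
noncomputable def cw {n : ℕ} (w : Fin n → ℝ) (i : Fin n) : ℝ :=
  w i - (if h : (i : ℕ) + 1 < n then w ⟨(i : ℕ) + 1, h⟩ else 0)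

lemma sum_Ici_cw {n : ℕ} (w : Fin n → ℝ) (k : Fin n) :
    ∑ j ∈ Finset.Ici k, cw w j = w k := by
  classical
  set W : ℕ → ℝ := fun a => if h : a < n then w ⟨a, h⟩ else 0 with hWdef
  have hW : ∀ j : Fin n, cw w j = W (j : ℕ) - W ((j : ℕ) + 1) := by
    intro j
    simp only [hWdef, cw, j.isLt, dif_pos, Fin.eta]
  have h1 : ∑ j ∈ Finset.Ici k, cw w j = ∑ j : Fin n, if k ≤ j then cw w j else 0 := by
    rw [← Finset.sum_filter]
    congr 1
    ext j
    simp
  rw [h1]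
  have h2 : (∑ j : Fin n, if k ≤ j then cw w j else 0)
      = ∑ a ∈ Finset.range n, (if (k : ℕ) ≤ a then W a - W (a + 1) else 0) := by
    rw [← Fin.sum_univ_eq_sum_range]
    refine Finset.sum_congr rfl fun j _ => ?_
    rw [hW j]
    by_cases hkj : k ≤ j
    · rw [if_pos hkj, if_pos (Fin.le_def.mp hkj)]
    · rw [if_neg hkj, if_neg (fun hc => hkj (Fin.le_def.mpr hc))]
  rw [h2, Finset.range_eq_Ico,
    ← Finset.sum_Ico_consecutive _ (Nat.zero_le (k : ℕ)) (le_of_lt k.isLt)]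
  have h3 : ∑ a ∈ Finset.Ico 0 (k : ℕ), (if (k : ℕ) ≤ a then W a - W (a + 1) else 0) = 0 := by
    refine Finset.sum_eq_zero fun a ha => ?_
    rw [Finset.mem_Ico] at ha
    rw [if_neg (by omega)]
  have h4 : ∑ a ∈ Finset.Ico (k : ℕ) n, (if (k : ℕ) ≤ a then W a - W (a + 1) else 0)
      = ∑ a ∈ Finset.Ico (k : ℕ) n, (W a - W (a + 1)) := by
    refine Finset.sum_congr rfl fun a ha => ?_
    rw [Finset.mem_Ico] at ha
    rw [if_pos ha.1]
  rw [h3, h4, zero_add, Finset.sum_Ico_eq_sum_range]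
  have h5 : ∑ a ∈ Finset.range (n - (k : ℕ)), (W ((k : ℕ) + a) - W ((k : ℕ) + a + 1))
      = ∑ a ∈ Finset.range (n - (k : ℕ)),
        ((fun i => W ((k : ℕ) + i)) a - (fun i => W ((k : ℕ) + i)) (a + 1)) := by
    refine Finset.sum_congr rfl fun a _ => ?_
    simp [Nat.add_assoc]
  rw [h5, Finset.sum_range_sub']
  have hkn : (k : ℕ) + (n - (k : ℕ)) = n := by omega
  simp only [Nat.add_zero, hkn, hWdef]
  rw [dif_pos k.isLt, dif_neg (lt_irrefl n), sub_zero, Fin.eta]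

lemma cw_pos {n : ℕ} {w : Fin n → ℝ} (hw : StrictAnti w) (hw0 : ∀ i, 0 < w i) (i : Fin n) :
    0 < cw w i := by
  unfold cw
  split
  · next h =>
    have : i < (⟨(i : ℕ) + 1, h⟩ : Fin n) := by simp [Fin.lt_def]
    have := hw this
    linarith
  · simpa using hw0 i

lemma ggf_eq_sum_lorenz {n : ℕ} (w x : Fin n → ℝ) :
    ggf w x = ∑ j, cw w j * lorenz x j := by
  classical
  unfold ggf lorenz
  have : ∑ j : Fin n, cw w j * ∑ k ∈ Finset.Iic j, sortedAsc x k
      = ∑ j : Fin n, ∑ k ∈ Finset.Iic j, cw w j * sortedAsc x k := by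
    refine Finset.sum_congr rfl fun j _ => ?_
    rw [Finset.mul_sum]
  rw [this, Finset.sum_comm' (t' := Finset.univ) (s' := fun k => Finset.Ici k)
    (by intro x y; simp)]
  refine Finset.sum_congr rfl fun k _ => ?_
  rw [← Finset.sum_mul, sum_Ici_cw]

lemma ggf_le_of_domW {n : ℕ} {w : Fin n → ℝ} (hw : StrictAnti w) (hw0 : ∀ i, 0 < w i)
    {x x' : Fin n → ℝ} (h : LorenzDomW x' x) : ggf w x ≤ ggf w x' := by
  rw [ggf_eq_sum_lorenz, ggf_eq_sum_lorenz]
  exact Finset.sum_le_sum fun i _ =>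
    mul_le_mul_of_nonneg_left (h i) (cw_pos hw hw0 i).le

lemma ggf_lt_of_domS {n : ℕ} {w : Fin n → ℝ} (hw : StrictAnti w) (hw0 : ∀ i, 0 < w i)
    {x x' : Fin n → ℝ} (h : LorenzDomS x' x) : ggf w x < ggf w x' := by
  rw [ggf_eq_sum_lorenz, ggf_eq_sum_lorenz]
  obtain ⟨i, hi⟩ : ∃ i, lorenz x' i ≠ lorenz x i := by
    by_contra hc
    push_neg at hc
    exact h.2 (funext hc)
  refine Finset.sum_lt_sum (fun j _ => mul_le_mul_of_nonneg_left (h.1 j) (cw_pos hw hw0 j).le)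
    ⟨i, Finset.mem_univ i, ?_⟩
  exact mul_lt_mul_of_pos_left (lt_of_le_of_ne (h.1 i) (Ne.symm hi)) (cw_pos hw hw0 i)

/-- (Proposition 1, part 1.) For `λ ∈ (0,1)` and strictly decreasing positive GGF weights
with first weight `1` on both sides, every maximizer of the two-sided GGF
`F(P) = (1−λ) g_{wᵘ}(u(P)) + λ g_{wⁱ}(v(P))` over `𝒫` is Lorenz-efficient. -/
theorem maximizer_lorenz_efficient {n m : ℕ} (hn : 0 < n) (hm : 0 < m)
    (μ : Fin n → Fin m → ℝ) (hμ : ∀ i j, μ i j ∈ Set.Icc (0 : ℝ) 1)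
    (b : Fin m → ℝ) (hb : Antitone b) (hb0 : ∀ k, 0 ≤ b k)
    (lam : ℝ) (hlam : lam ∈ Set.Ioo (0 : ℝ) 1)
    (wu : Fin n → ℝ) (hwu1 : wu ⟨0, hn⟩ = 1) (hwu : StrictAnti wu) (hwu0 : ∀ i, 0 < wu i)
    (wi : Fin m → ℝ) (hwi1 : wi ⟨0, hm⟩ = 1) (hwi : StrictAnti wi) (hwi0 : ∀ j, 0 < wi j)
    (P : Fin n → Fin m → Fin m → ℝ) (hP : P ∈ Policies n m)
    (hmax : ∀ P' ∈ Policies n m,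
      (1 - lam) * ggf wu (uutil μ b P') + lam * ggf wi (iexpo b P') ≤
        (1 - lam) * ggf wu (uutil μ b P) + lam * ggf wi (iexpo b P)) :
    LorenzEfficient μ b P := by
  intro ⟨P', hP', h⟩
  have hF := hmax P' hP'
  have h1l : (0:ℝ) < 1 - lam := by linarith [hlam.2]
  rcases h with ⟨hu, hv⟩ | ⟨hv, hu⟩
  · have h1 := ggf_le_of_domW hwu hwu0 hu
    have h2 := ggf_lt_of_domS hwi hwi0 hv
    nlinarith [hlam.1]
  · have h1 := ggf_le_of_domW hwi hwi0 hv
    have h2 := ggf_lt_of_domS hwu hwu0 hu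
    nlinarith [hlam.1]
end
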